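/- (Corollary 6.4, nonconvex part: possibly biased intermittent perturbations.) Under Assumptions (A1)–(A3), suppose the perturbations are uniformly bounded, ‖δ_i^{(t)}‖ ≤ D and ‖ε_i^{(t)}‖ ≤ D almost surely (no zero-mean assumption). Let Q_δ and Q_ε be the numbers of pairs (t, i), t ∈ {0,…,T−1}, at which δ_i^{(t)} and ε_i^{(t)} respectively are not identically zero. Then for every A > 0 there exist c, C > 0, depending only on N, L_{∇ℓ}, σ, Δ₀, D, the operator constants of (A3), and A, such that for every T ≥ 1, if γ = min{1/(3L_{∇ℓ}), c T^{−1/2}}, Q_δ ≤ A T^{1/2} and Q_ε ≤ A T^{1/2}, then (1/T) Σ_{t=0}^{T−1} E[‖∇ℓ(w^{(t)})‖²] ≤ C T^{−1/2}. -/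

import Mathlib

/-!
Write `e_t = ũ^{(t)} - u^{(t)}` for the error that the perturbations cause in the backpropagated
gradient. By the descent lemma and Young's inequality, a step with `γ ≤ 1/(3L)` satisfies
`γ/12 · E‖∇ℓ(w_t)‖² ≤ E ℓ(w_t) - E ℓ(w_{t+1}) + 2γ E‖e_t‖² + 2Lγ²σ²`. Propagating perturbations of
norm at most `D` forward and backward through the `N` layers with the bounds of (A3) gives
`‖e_t‖² ≤ B` for a constant `B`, and `e_t = 0` at every step without perturbation. Summing over
`t < T`, the error contributes at most `2γ B (Q_δ + Q_ε) = O(γ √T)`, which is of the same order as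
the other terms for `γ ≍ T^{-1/2}`.
-/

open MeasureTheory
open scoped BigOperators

noncomputable section

/-- The stacked parameter space `ℝ^{d_{w_1}} × ⋯ × ℝ^{d_{w_N}}` (with the `ℓ²` product
structure); component `j : Fin N` holds the weight `w_{j+1}` of the `(j+1)`-st operator. -/
abbrev ParamSpace (N : ℕ) (dw : ℕ → ℕ) : Type :=
  PiLp 2 (fun j : Fin N => EuclideanSpace ℝ (Fin (dw (j.1 + 1))))

/-- The Frobenius norm of a (continuous) linear map out of a Euclidean space. -/
noncomputable def frobNorm {n : ℕ} {F : Type*} [NormedAddCommGroup F] [NormedSpace ℝ F]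
    (A : EuclideanSpace ℝ (Fin n) →L[ℝ] F) : ℝ :=
  Real.sqrt (∑ j, ‖A (EuclideanSpace.single j 1)‖ ^ 2)

/-- The Frobenius norm of a third-order tensor, presented as a (continuous) linear map from a
Euclidean space into (continuous) linear maps out of a Euclidean space. -/
noncomputable def frobNorm3 {m q : ℕ} {F : Type*} [NormedAddCommGroup F] [NormedSpace ℝ F]
    (A : EuclideanSpace ℝ (Fin m) →L[ℝ] (EuclideanSpace ℝ (Fin q) →L[ℝ] F)) : ℝ :=
  Real.sqrt (∑ k, ∑ l, ‖A (EuclideanSpace.single k 1) (EuclideanSpace.single l 1)‖ ^ 2)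

open scoped RealInnerProductSpace

section FrobeniusNorm

variable {n : ℕ} {F : Type*} [NormedAddCommGroup F] [NormedSpace ℝ F]

lemma norm_apply_le_frobNorm_mul (A : EuclideanSpace ℝ (Fin n) →L[ℝ] F)
    (x : EuclideanSpace ℝ (Fin n)) : ‖A x‖ ≤ frobNorm A * ‖x‖ := by
  have hx : A x = ∑ j, x j • A (EuclideanSpace.single j 1) := by
    conv_lhs => rw [← (EuclideanSpace.basisFun (Fin n) ℝ).sum_repr x]
    simp
  calc ‖A x‖ ≤ ∑ j, |x j| * ‖A (EuclideanSpace.single j 1)‖ := by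
        rw [hx]
        exact (norm_sum_le _ _).trans_eq (by simp [norm_smul])
    _ ≤ √(∑ j, |x j| ^ 2) * frobNorm A := Real.sum_mul_le_sqrt_mul_sqrt _ _ _
    _ = frobNorm A * ‖x‖ := by simp [EuclideanSpace.norm_eq, mul_comm]

lemma opNorm_le_frobNorm (A : EuclideanSpace ℝ (Fin n) →L[ℝ] F) : ‖A‖ ≤ frobNorm A :=
  A.opNorm_le_bound (Real.sqrt_nonneg _) (norm_apply_le_frobNorm_mul A)

end FrobeniusNorm

lemma norm_adjoint_apply_sub_adjoint_apply_le {E F : Type*} [NormedAddCommGroup E]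
    [InnerProductSpace ℝ E] [CompleteSpace E] [NormedAddCommGroup F] [InnerProductSpace ℝ F]
    [CompleteSpace F] {A B : E →L[ℝ] F} {x z : F} {a r b c : ℝ} (ha : 0 ≤ a) (hb : 0 ≤ b)
    (hA : ‖A‖ ≤ a) (hxz : ‖x - z‖ ≤ r) (hAB : ‖A - B‖ ≤ b) (hz : ‖z‖ ≤ c) :
    ‖ContinuousLinearMap.adjoint A x - ContinuousLinearMap.adjoint B z‖ ≤ a * r + b * c := by
  have hsplit : ContinuousLinearMap.adjoint A x - ContinuousLinearMap.adjoint B z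
      = ContinuousLinearMap.adjoint A (x - z) + ContinuousLinearMap.adjoint (A - B) z := by
    simp only [map_sub, sub_apply]
    abel
  rw [hsplit]
  refine (norm_add_le _ _).trans (add_le_add ?_ ?_)
  · refine ((ContinuousLinearMap.adjoint A).le_opNorm _).trans ?_
    rw [LinearIsometryEquiv.norm_map]
    exact mul_le_mul hA hxz (norm_nonneg _) ha
  · refine ((ContinuousLinearMap.adjoint (A - B)).le_opNorm _).trans ?_
    rw [LinearIsometryEquiv.norm_map]
    exact mul_le_mul hAB hz (norm_nonneg _) hb

lemma le_mul_add_one_pow_of_le_mul_add {a : ℕ → ℝ} {L M : ℝ} {n : ℕ} (hL : 0 ≤ L)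
    (hM : 0 ≤ M) (h0 : a 0 ≤ M) (hsucc : ∀ k < n, a (k + 1) ≤ L * a k + M) :
    ∀ k ≤ n, a k ≤ M * (L + 1) ^ k := by
  intro k
  induction k with
  | zero => simpa using h0
  | succ k ih =>
    intro hk
    have hpow : 1 ≤ (L + 1) ^ k := one_le_pow₀ (by linarith)
    calc a (k + 1) ≤ L * (M * (L + 1) ^ k) + M :=
          (hsucc k hk).trans (by gcongr; exact ih (by omega))
      _ ≤ M * (L + 1) ^ (k + 1) := by rw [pow_succ]; nlinarith

lemma le_mul_add_one_pow_sub_of_le_mul_succ_add {b : ℕ → ℝ} {L M : ℝ} {m n : ℕ} (hL : 0 ≤ L)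
    (hM : 0 ≤ M) (hn : b n ≤ M) (hpred : ∀ i, m ≤ i → i < n → b i ≤ L * b (i + 1) + M)
    {i : ℕ} (hmi : m ≤ i) (hin : i ≤ n) : b i ≤ M * (L + 1) ^ (n - i) := by
  have key := le_mul_add_one_pow_of_le_mul_add (a := fun k => b (n - k)) (n := n - m) hL hM
    (by simpa using hn) (fun k hk => ?_) (n - i) (by omega)
  · rwa [Nat.sub_sub_self hin] at key
  · have hidx : n - k = n - (k + 1) + 1 := by omega
    rw [hidx]
    exact hpred _ (by omega) (by omega)

section ConditionalExpectation

variable {Ω E : Type*} {m mΩ : MeasurableSpace Ω} {μ : Measure Ω}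
  [NormedAddCommGroup E] [InnerProductSpace ℝ E] {G g : Ω → E}

lemma MeasureTheory.MemLp.integrable_inner {f g : Ω → E} (hf : MemLp f 2 μ) (hg : MemLp g 2 μ) :
    Integrable (fun ω => ⟪f ω, g ω⟫) μ :=
  memLp_one_iff_integrable.1 <| (innerSL ℝ).memLp_of_bilin 1 hf hg

lemma integral_inner_eq_integral_norm_sq_of_condExp_eq [CompleteSpace E] [IsFiniteMeasure μ]
    (hm : m ≤ mΩ)
    (hG : StronglyMeasurable[m] G) (hG2 : MemLp G 2 μ) (hg2 : MemLp g 2 μ)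
    (hce : μ[g | m] =ᵐ[μ] G) :
    ∫ ω, ⟪G ω, g ω⟫ ∂μ = ∫ ω, ‖G ω‖ ^ 2 ∂μ := by
  have hpull := condExp_bilin_of_stronglyMeasurable_left (innerSL ℝ) hG
    (hG2.integrable_inner hg2) (hg2.integrable one_le_two)
  calc ∫ ω, ⟪G ω, g ω⟫ ∂μ = ∫ ω, (μ[fun ω => innerSL ℝ (G ω) (g ω) | m]) ω ∂μ :=
        (integral_condExp hm).symm
    _ = ∫ ω, ‖G ω‖ ^ 2 ∂μ :=
        integral_congr_ae <| hpull.trans <| hce.mono fun ω h => by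
          simp only [h]; exact real_inner_self_eq_norm_sq _

lemma integral_norm_sq_le_of_condExp_eq [CompleteSpace E] [IsProbabilityMeasure μ]
    (hm : m ≤ mΩ)
    (hG : StronglyMeasurable[m] G) (hG2 : MemLp G 2 μ) (hg2 : MemLp g 2 μ)
    (hce : μ[g | m] =ᵐ[μ] G) {σ : ℝ}
    (hvar : ∀ᵐ ω ∂μ, (μ[fun ω' => ‖g ω' - G ω'‖ ^ 2 | m]) ω ≤ σ ^ 2) :
    ∫ ω, ‖g ω‖ ^ 2 ∂μ ≤ ∫ ω, ‖G ω‖ ^ 2 ∂μ + σ ^ 2 := by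
  have hvar_int : ∫ ω, ‖g ω - G ω‖ ^ 2 ∂μ ≤ σ ^ 2 := by
    rw [← integral_condExp hm]
    simpa using integral_mono_ae integrable_condExp (integrable_const (σ ^ 2)) hvar
  have hexpand : ∫ ω, ‖g ω - G ω‖ ^ 2 ∂μ
      = ∫ ω, ‖g ω‖ ^ 2 ∂μ - 2 * ∫ ω, ⟪G ω, g ω⟫ ∂μ + ∫ ω, ‖G ω‖ ^ 2 ∂μ := by
    have hg' := hg2.integrable_norm_pow two_ne_zero
    have hG' := hG2.integrable_norm_pow two_ne_zero
    have hGg := hG2.integrable_inner hg2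
    simp_rw [norm_sub_sq_real, real_inner_comm (G _)]
    rw [integral_add (by fun_prop) (by fun_prop), integral_sub (by fun_prop) (by fun_prop),
      integral_const_mul]
  rw [hexpand, integral_inner_eq_integral_norm_sq_of_condExp_eq hm hG hG2 hg2 hce] at hvar_int
  linarith

end ConditionalExpectation

section Descent

variable {E : Type*} [NormedAddCommGroup E] [InnerProductSpace ℝ E] [CompleteSpace E]
  {φ : E → ℝ} {L : ℝ}

lemma le_add_inner_gradient_add_mul_norm_sq (hφ : Differentiable ℝ φ) (hL : 0 ≤ L)
    (hLip : ∀ p q, ‖gradient φ p - gradient φ q‖ ≤ L * ‖p - q‖) (w w' : E) :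
    φ w' ≤ φ w + ⟪gradient φ w, w' - w⟫ + L * ‖w' - w‖ ^ 2 := by
  set h : E → ℝ := fun x => φ x - ⟪gradient φ w, x⟫
  have hderiv : ∀ x,
      HasFDerivAt h (InnerProductSpace.toDual ℝ E (gradient φ x - gradient φ w)) x := by
    intro x
    rw [map_sub]
    exact (hasGradientAt_iff_hasFDerivAt.mp (hφ x).hasGradientAt).sub
      (InnerProductSpace.toDual ℝ E (gradient φ w)).hasFDerivAt
  have hmvt : ‖h w' - h w‖ ≤ L * ‖w' - w‖ * ‖w' - w‖ := by
    refine (convex_segment w w').norm_image_sub_le_of_norm_fderiv_le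
      (fun x _ => (hderiv x).differentiableAt) (fun x hx => ?_)
      (left_mem_segment ℝ w w') (right_mem_segment ℝ w w')
    rw [(hderiv x).fderiv, LinearIsometryEquiv.norm_map]
    exact (hLip x w).trans (by gcongr; exact norm_sub_le_of_mem_segment hx)
  have hdiff : h w' - h w = φ w' - φ w - ⟪gradient φ w, w' - w⟫ := by
    simp only [h, inner_sub_right]; ring
  nlinarith [le_abs_self (h w' - h w), Real.norm_eq_abs (h w' - h w)]

lemma le_sub_inner_gradient_add_of_step (hφ : Differentiable ℝ φ) (hL : 0 ≤ L)
    (hLip : ∀ p q, ‖gradient φ p - gradient φ q‖ ≤ L * ‖p - q‖) {γ : ℝ} (hγ : 0 ≤ γ)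
    (w g e : E) :
    φ (w - γ • (g + e)) ≤ φ w - γ * ⟪gradient φ w, g⟫ + γ / 4 * ‖gradient φ w‖ ^ 2
      + (γ + 2 * L * γ ^ 2) * ‖e‖ ^ 2 + 2 * L * γ ^ 2 * ‖g‖ ^ 2 := by
  have hdesc := le_add_inner_gradient_add_mul_norm_sq hφ hL hLip w (w - γ • (g + e))
  rw [sub_sub_cancel_left, inner_neg_right, norm_neg, inner_smul_right, inner_add_right,
    norm_smul, Real.norm_eq_abs, abs_of_nonneg hγ] at hdesc
  have hyoung : -⟪gradient φ w, e⟫ ≤ ‖gradient φ w‖ ^ 2 / 4 + ‖e‖ ^ 2 := by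
    nlinarith [neg_le_abs ⟪gradient φ w, e⟫, abs_real_inner_le_norm (gradient φ w) e,
      sq_nonneg (‖gradient φ w‖ - 2 * ‖e‖)]
  have hsum : ‖g + e‖ ^ 2 ≤ 2 * ‖g‖ ^ 2 + 2 * ‖e‖ ^ 2 := by
    nlinarith [norm_add_sq_real g e, norm_sub_sq_real g e, sq_nonneg ‖g - e‖]
  nlinarith [mul_le_mul_of_nonneg_left hyoung hγ,
    mul_le_mul_of_nonneg_left hsum (mul_nonneg hL (sq_nonneg γ))]

lemma integral_le_sub_integral_add_of_step {Ω : Type*} {mΩ : MeasurableSpace Ω}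
    {μ : Measure Ω} (hφ : Differentiable ℝ φ) (hL : 0 ≤ L)
    (hLip : ∀ p q, ‖gradient φ p - gradient φ q‖ ≤ L * ‖p - q‖) {γ σ : ℝ} (hγ : 0 ≤ γ)
    (hγL : γ * (3 * L) ≤ 1) {W W' g e : Ω → E} (hW' : ∀ ω, W' ω = W ω - γ • (g ω + e ω))
    (hφW : Integrable (fun ω => φ (W ω)) μ) (hφW' : Integrable (fun ω => φ (W' ω)) μ)
    (hG : MemLp (fun ω => gradient φ (W ω)) 2 μ) (hg : MemLp g 2 μ) (he : MemLp e 2 μ)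
    (hinner : ∫ ω, ⟪gradient φ (W ω), g ω⟫ ∂μ = ∫ ω, ‖gradient φ (W ω)‖ ^ 2 ∂μ)
    (hsecond : ∫ ω, ‖g ω‖ ^ 2 ∂μ ≤ ∫ ω, ‖gradient φ (W ω)‖ ^ 2 ∂μ + σ ^ 2) :
    γ / 12 * ∫ ω, ‖gradient φ (W ω)‖ ^ 2 ∂μ
      ≤ ∫ ω, φ (W ω) ∂μ - ∫ ω, φ (W' ω) ∂μ
        + (2 * γ * ∫ ω, ‖e ω‖ ^ 2 ∂μ + 2 * L * γ ^ 2 * σ ^ 2) := by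
  have hG' := hG.integrable_norm_pow two_ne_zero
  have hg' := hg.integrable_norm_pow two_ne_zero
  have he' := he.integrable_norm_pow two_ne_zero
  have hGg := hG.integrable_inner hg
  have hmono : ∫ ω, (φ (W' ω) - φ (W ω)) ∂μ ≤ ∫ ω, (-γ * ⟪gradient φ (W ω), g ω⟫
      + γ / 4 * ‖gradient φ (W ω)‖ ^ 2 + (γ + 2 * L * γ ^ 2) * ‖e ω‖ ^ 2
      + 2 * L * γ ^ 2 * ‖g ω‖ ^ 2) ∂μ := by
    refine integral_mono (hφW'.sub hφW) (by fun_prop) fun ω => ?_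
    have := le_sub_inner_gradient_add_of_step hφ hL hLip hγ (W ω) (g ω) (e ω)
    rw [← hW'] at this
    dsimp only
    linarith
  rw [integral_sub hφW' hφW, integral_add (by fun_prop) (by fun_prop),
    integral_add (by fun_prop) (by fun_prop), integral_add (by fun_prop) (by fun_prop),
    integral_const_mul, integral_const_mul, integral_const_mul, integral_const_mul,
    hinner] at hmono
  have hGnn : 0 ≤ ∫ ω, ‖gradient φ (W ω)‖ ^ 2 ∂μ := integral_nonneg fun ω => sq_nonneg _
  have henn : 0 ≤ ∫ ω, ‖e ω‖ ^ 2 ∂μ := integral_nonneg fun ω => sq_nonneg _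
  -- `2Lγ² ≤ 2γ/3` turns the second moment of `g` into `-γ/12` of the squared gradient
  nlinarith [mul_le_mul_of_nonneg_left hsecond (by positivity : 0 ≤ 2 * L * γ ^ 2),
    mul_nonneg (mul_nonneg hγ hGnn) (by linarith : 0 ≤ 1 - γ * (3 * L)),
    mul_nonneg (mul_nonneg hγ henn) (by linarith : 0 ≤ 1 - γ * (3 * L))]

lemma integral_le_sub_integral_add_of_sgd_step {Ω : Type*} {m mΩ : MeasurableSpace Ω}
    {μ : Measure Ω} [IsProbabilityMeasure μ] (hm : m ≤ mΩ) (hφ : Differentiable ℝ φ)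
    (hL : 0 ≤ L) (hLip : ∀ p q, ‖gradient φ p - gradient φ q‖ ≤ L * ‖p - q‖) {γ σ : ℝ}
    (hγ : 0 ≤ γ) (hγL : γ * (3 * L) ≤ 1) {W W' g e : Ω → E}
    (hW' : ∀ ω, W' ω = W ω - γ • (g ω + e ω)) (hW : StronglyMeasurable[m] W)
    (hφW : Integrable (fun ω => φ (W ω)) μ) (hφW' : Integrable (fun ω => φ (W' ω)) μ)
    (hgrad : Integrable (fun ω => ‖gradient φ (W ω)‖ ^ 2) μ) (hg : MemLp g 2 μ)
    (he : MemLp e 2 μ) (hmean : μ[g | m] =ᵐ[μ] fun ω => gradient φ (W ω))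
    (hvar : ∀ᵐ ω ∂μ, (μ[fun ω' => ‖g ω' - gradient φ (W ω')‖ ^ 2 | m]) ω ≤ σ ^ 2) :
    γ / 12 * ∫ ω, ‖gradient φ (W ω)‖ ^ 2 ∂μ
      ≤ ∫ ω, φ (W ω) ∂μ - ∫ ω, φ (W' ω) ∂μ
        + (2 * γ * ∫ ω, ‖e ω‖ ^ 2 ∂μ + 2 * L * γ ^ 2 * σ ^ 2) := by
  have hG : StronglyMeasurable[m] fun ω => gradient φ (W ω) :=
    (LipschitzWith.of_dist_le' fun p q => by simpa only [dist_eq_norm] using hLip p q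
      ).continuous.comp_stronglyMeasurable hW
  have hG2 : MemLp (fun ω => gradient φ (W ω)) 2 μ :=
    (memLp_two_iff_integrable_sq_norm (hG.mono hm).aestronglyMeasurable).2 hgrad
  exact integral_le_sub_integral_add_of_step hφ hL hLip hγ hγL hW' hφW hφW' hG2 hg he
    (integral_inner_eq_integral_norm_sq_of_condExp_eq hm hG hG2 hg hmean)
    (integral_norm_sq_le_of_condExp_eq hm hG hG2 hg hmean hvar)

end Descent

local notation "𝕍" n:max => EuclideanSpace ℝ (Fin n)

section Backpropagation

variable {N : ℕ} {d dw : ℕ → ℕ} {f : (i : ℕ) → 𝕍 (d (i - 1)) → 𝕍 (dw i) → 𝕍 (d i)}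
  {w : ParamSpace N dw} {y ytil v vtil : (i : ℕ) → 𝕍 (d i)} {Cf Lf L1f D : ℝ}

lemma norm_forward_error_le {δ : (i : ℕ) → 𝕍 (d i)} (hLf : 0 ≤ Lf) (hD : 0 ≤ D)
    (hLipf : ∀ i, 1 ≤ i → i ≤ N → ∀ (y₁ y₂ : 𝕍 (d (i - 1))) (wi : 𝕍 (dw i)),
      ‖f i y₁ wi - f i y₂ wi‖ ≤ Lf * ‖y₁ - y₂‖)
    (hδ : ∀ i, 1 ≤ i → i ≤ N → ‖δ i‖ ≤ D) (hy0 : ytil 0 = y 0)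
    (hfwd : ∀ i, (hi : i < N) → y (i + 1) = f (i + 1) (y i) (w ⟨i, hi⟩))
    (hfwdp : ∀ i, (hi : i < N) → ytil (i + 1) = f (i + 1) (ytil i) (w ⟨i, hi⟩) + δ (i + 1))
    {i : ℕ} (hi : i ≤ N) : ‖ytil i - y i‖ ≤ D * (Lf + 1) ^ N := by
  refine (le_mul_add_one_pow_of_le_mul_add (a := fun i => ‖ytil i - y i‖) hLf hD
    (by simpa [hy0] using hD) (fun k hk => ?_) i hi).trans ?_
  · calc ‖ytil (k + 1) - y (k + 1)‖
        = ‖(f (k + 1) (ytil k) (w ⟨k, hk⟩) - f (k + 1) (y k) (w ⟨k, hk⟩)) + δ (k + 1)‖ := by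
          rw [hfwdp k hk, hfwd k hk, add_sub_right_comm]
      _ ≤ Lf * ‖ytil k - y k‖ + D :=
          (norm_add_le _ _).trans (add_le_add (hLipf _ (by omega) (by omega) _ _ _)
            (hδ _ (by omega) (by omega)))
  · gcongr
    linarith

lemma norm_backward_le (hCf : 0 ≤ Cf) (hdN : d N = 1)
    (hJ1 : ∀ i, 1 ≤ i → i ≤ N → ∀ (yv : 𝕍 (d (i - 1))) (wi : 𝕍 (dw i)),
      ‖fderiv ℝ (fun z => f i z wi) yv‖ ≤ Cf)
    (hvN : ∀ j, v N j = 1)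
    (hbwd : ∀ i, 1 ≤ i → (hi : i < N) →
      v i = ContinuousLinearMap.adjoint (fderiv ℝ (fun z => f (i + 1) z (w ⟨i, hi⟩)) (y i))
        (v (i + 1)))
    {i : ℕ} (h1i : 1 ≤ i) (hiN : i ≤ N) : ‖v i‖ ≤ (Cf + 1) ^ N := by
  have hvN' : ‖v N‖ = 1 := by simp [EuclideanSpace.norm_eq, hvN, hdN]
  refine (le_mul_add_one_pow_sub_of_le_mul_succ_add (b := fun i => ‖v i‖) (M := 1) hCf zero_le_one
    hvN'.le (fun i h1 hi => ?_) h1i hiN).trans ?_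
  · rw [hbwd i h1 hi]
    refine (ContinuousLinearMap.le_opNorm _ _).trans ?_
    rw [LinearIsometryEquiv.norm_map]
    nlinarith [hJ1 (i + 1) (by omega) (by omega) (y i) (w ⟨i, hi⟩), norm_nonneg (v (i + 1))]
  · rw [one_mul]
    exact pow_le_pow_right₀ (by linarith) (Nat.sub_le N i)

lemma norm_backward_error_le {ε : (i : ℕ) → 𝕍 (d (i - 1))} {Ey Vb : ℝ} (hCf : 0 ≤ Cf)
    (hL1f : 0 ≤ L1f) (hD : 0 ≤ D) (hEy : 0 ≤ Ey) (hVb : 0 ≤ Vb)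
    (hJ1 : ∀ i, 1 ≤ i → i ≤ N → ∀ (yv : 𝕍 (d (i - 1))) (wi : 𝕍 (dw i)),
      ‖fderiv ℝ (fun z => f i z wi) yv‖ ≤ Cf)
    (hLipJ1 : ∀ i, 1 ≤ i → i ≤ N → ∀ (y₁ y₂ : 𝕍 (d (i - 1))) (wi : 𝕍 (dw i)),
      frobNorm (fderiv ℝ (fun z => f i z wi) y₁ - fderiv ℝ (fun z => f i z wi) y₂) ≤
        L1f * ‖y₁ - y₂‖)
    (hε : ∀ i, 2 ≤ i → i ≤ N → ‖ε i‖ ≤ D)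
    (hyerr : ∀ i ≤ N, ‖ytil i - y i‖ ≤ Ey) (hvb : ∀ i, 1 ≤ i → i ≤ N → ‖v i‖ ≤ Vb)
    (hvN : ∀ j, v N j = 1) (hvtilN : ∀ j, vtil N j = 1)
    (hbwd : ∀ i, 1 ≤ i → (hi : i < N) →
      v i = ContinuousLinearMap.adjoint (fderiv ℝ (fun z => f (i + 1) z (w ⟨i, hi⟩)) (y i))
        (v (i + 1)))
    (hbwdp : ∀ i, 1 ≤ i → (hi : i < N) →
      vtil i = ContinuousLinearMap.adjoint
        (fderiv ℝ (fun z => f (i + 1) z (w ⟨i, hi⟩)) (ytil i)) (vtil (i + 1)) + ε (i + 1))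
    {i : ℕ} (h1i : 1 ≤ i) (hiN : i ≤ N) :
    ‖vtil i - v i‖ ≤ (L1f * Ey * Vb + D) * (Cf + 1) ^ N := by
  have hM : 0 ≤ L1f * Ey * Vb + D := by positivity
  have hvvN : vtil N = v N := by ext j; rw [hvtilN, hvN]
  refine (le_mul_add_one_pow_sub_of_le_mul_succ_add (b := fun i => ‖vtil i - v i‖) hCf hM
    (by simpa [hvvN] using hM) (fun i h1 hi => ?_) h1i hiN).trans ?_
  · have hadj := norm_adjoint_apply_sub_adjoint_apply_le (x := vtil (i + 1)) (z := v (i + 1))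
      hCf (mul_nonneg hL1f hEy) (hJ1 (i + 1) (by omega) (by omega) (ytil i) (w ⟨i, hi⟩)) le_rfl
      ((opNorm_le_frobNorm _).trans ((hLipJ1 (i + 1) (by omega) (by omega) _ _ _).trans
        (mul_le_mul_of_nonneg_left (hyerr i (by omega)) hL1f)))
      (hvb (i + 1) (by omega) (by omega))
    rw [hbwdp i h1 hi, hbwd i h1 hi, add_sub_right_comm]
    refine (norm_add_le _ _).trans ?_
    linarith [hε (i + 1) (by omega) (by omega)]
  · gcongr
    · linarith
    · exact Nat.sub_le N i

lemma norm_sq_paramGrad_sub_le_of_bounds {u utilde : ParamSpace N dw} {Ey Vb Ev : ℝ} (hCf : 0 ≤ Cf)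
    (hL1f : 0 ≤ L1f) (hEy : 0 ≤ Ey)
    (hJ2 : ∀ i, 1 ≤ i → i ≤ N → ∀ (yv : 𝕍 (d (i - 1))) (wi : 𝕍 (dw i)),
      ‖fderiv ℝ (fun z => f i yv z) wi‖ ≤ Cf)
    (hLipJ2 : ∀ i, 1 ≤ i → i ≤ N → ∀ (y₁ y₂ : 𝕍 (d (i - 1))) (wi : 𝕍 (dw i)),
      frobNorm (fderiv ℝ (fun z => f i y₁ z) wi - fderiv ℝ (fun z => f i y₂ z) wi) ≤
        L1f * ‖y₁ - y₂‖)
    (hyerr : ∀ i ≤ N, ‖ytil i - y i‖ ≤ Ey) (hvb : ∀ i, 1 ≤ i → i ≤ N → ‖v i‖ ≤ Vb)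
    (hverr : ∀ i, 1 ≤ i → i ≤ N → ‖vtil i - v i‖ ≤ Ev)
    (hu : ∀ i, (hi : i < N) → u ⟨i, hi⟩ =
      ContinuousLinearMap.adjoint (fderiv ℝ (fun z => f (i + 1) (y i) z) (w ⟨i, hi⟩)) (v (i + 1)))
    (hut : ∀ i, (hi : i < N) → utilde ⟨i, hi⟩ =
      ContinuousLinearMap.adjoint (fderiv ℝ (fun z => f (i + 1) (ytil i) z) (w ⟨i, hi⟩))
        (vtil (i + 1))) :
    ‖utilde - u‖ ^ 2 ≤ N * (Cf * Ev + L1f * Ey * Vb) ^ 2 := by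
  have hcomp : ∀ j : Fin N, ‖(utilde - u) j‖ ≤ Cf * Ev + L1f * Ey * Vb := by
    rintro ⟨i, hi⟩
    rw [PiLp.sub_apply, hut i hi, hu i hi]
    exact norm_adjoint_apply_sub_adjoint_apply_le hCf (mul_nonneg hL1f hEy)
      (hJ2 (i + 1) (by omega) (by omega) _ _) (hverr (i + 1) (by omega) (by omega))
      ((opNorm_le_frobNorm _).trans ((hLipJ2 (i + 1) (by omega) (by omega) _ _ _).trans
        (mul_le_mul_of_nonneg_left (hyerr i (by omega)) hL1f)))
      (hvb (i + 1) (by omega) (by omega))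
  calc ‖utilde - u‖ ^ 2 = ∑ j, ‖(utilde - u) j‖ ^ 2 := PiLp.norm_sq_eq_of_L2 _ _
    _ ≤ ∑ _j : Fin N, (Cf * Ev + L1f * Ey * Vb) ^ 2 :=
        Finset.sum_le_sum fun j _ => pow_le_pow_left₀ (norm_nonneg _) (hcomp j) 2
    _ = N * (Cf * Ev + L1f * Ey * Vb) ^ 2 := by simp

/-- `D (Lf + 1) ^ N` bounds the forward error, `(Cf + 1) ^ N` the backward signal and
`(L1f D (Lf + 1) ^ N (Cf + 1) ^ N + D) (Cf + 1) ^ N` the backward error. -/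
def gradErrorBound (N : ℕ) (Cf Lf L1f D : ℝ) : ℝ :=
  N * (Cf * ((L1f * (D * (Lf + 1) ^ N) * (Cf + 1) ^ N + D) * (Cf + 1) ^ N)
    + L1f * (D * (Lf + 1) ^ N) * (Cf + 1) ^ N) ^ 2

lemma gradErrorBound_nonneg (N : ℕ) (Cf Lf L1f D : ℝ) : 0 ≤ gradErrorBound N Cf Lf L1f D := by
  unfold gradErrorBound; positivity

@[simp]
lemma gradErrorBound_zero (N : ℕ) (Cf Lf L1f : ℝ) : gradErrorBound N Cf Lf L1f 0 = 0 := by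
  simp [gradErrorBound]

lemma norm_sq_paramGrad_sub_le_gradErrorBound {δ : (i : ℕ) → 𝕍 (d i)} {ε : (i : ℕ) → 𝕍 (d (i - 1))}
    {u utilde : ParamSpace N dw} (hCf : 0 ≤ Cf) (hLf : 0 ≤ Lf) (hL1f : 0 ≤ L1f) (hD : 0 ≤ D)
    (hdN : d N = 1)
    (hJ1 : ∀ i, 1 ≤ i → i ≤ N → ∀ (yv : 𝕍 (d (i - 1))) (wi : 𝕍 (dw i)),
      ‖fderiv ℝ (fun z => f i z wi) yv‖ ≤ Cf)
    (hJ2 : ∀ i, 1 ≤ i → i ≤ N → ∀ (yv : 𝕍 (d (i - 1))) (wi : 𝕍 (dw i)),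
      ‖fderiv ℝ (fun z => f i yv z) wi‖ ≤ Cf)
    (hLipf : ∀ i, 1 ≤ i → i ≤ N → ∀ (y₁ y₂ : 𝕍 (d (i - 1))) (wi : 𝕍 (dw i)),
      ‖f i y₁ wi - f i y₂ wi‖ ≤ Lf * ‖y₁ - y₂‖)
    (hLipJ1 : ∀ i, 1 ≤ i → i ≤ N → ∀ (y₁ y₂ : 𝕍 (d (i - 1))) (wi : 𝕍 (dw i)),
      frobNorm (fderiv ℝ (fun z => f i z wi) y₁ - fderiv ℝ (fun z => f i z wi) y₂) ≤
        L1f * ‖y₁ - y₂‖)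
    (hLipJ2 : ∀ i, 1 ≤ i → i ≤ N → ∀ (y₁ y₂ : 𝕍 (d (i - 1))) (wi : 𝕍 (dw i)),
      frobNorm (fderiv ℝ (fun z => f i y₁ z) wi - fderiv ℝ (fun z => f i y₂ z) wi) ≤
        L1f * ‖y₁ - y₂‖)
    (hδ : ∀ i, 1 ≤ i → i ≤ N → ‖δ i‖ ≤ D) (hε : ∀ i, 2 ≤ i → i ≤ N → ‖ε i‖ ≤ D)
    (hy0 : ytil 0 = y 0)
    (hfwd : ∀ i, (hi : i < N) → y (i + 1) = f (i + 1) (y i) (w ⟨i, hi⟩))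
    (hfwdp : ∀ i, (hi : i < N) → ytil (i + 1) = f (i + 1) (ytil i) (w ⟨i, hi⟩) + δ (i + 1))
    (hvN : ∀ j, v N j = 1) (hvtilN : ∀ j, vtil N j = 1)
    (hbwd : ∀ i, 1 ≤ i → (hi : i < N) →
      v i = ContinuousLinearMap.adjoint (fderiv ℝ (fun z => f (i + 1) z (w ⟨i, hi⟩)) (y i))
        (v (i + 1)))
    (hbwdp : ∀ i, 1 ≤ i → (hi : i < N) →
      vtil i = ContinuousLinearMap.adjoint
        (fderiv ℝ (fun z => f (i + 1) z (w ⟨i, hi⟩)) (ytil i)) (vtil (i + 1)) + ε (i + 1))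
    (hu : ∀ i, (hi : i < N) → u ⟨i, hi⟩ =
      ContinuousLinearMap.adjoint (fderiv ℝ (fun z => f (i + 1) (y i) z) (w ⟨i, hi⟩)) (v (i + 1)))
    (hut : ∀ i, (hi : i < N) → utilde ⟨i, hi⟩ =
      ContinuousLinearMap.adjoint (fderiv ℝ (fun z => f (i + 1) (ytil i) z) (w ⟨i, hi⟩))
        (vtil (i + 1))) :
    ‖utilde - u‖ ^ 2 ≤ gradErrorBound N Cf Lf L1f D := by
  have hyerr := fun i (hi : i ≤ N) => norm_forward_error_le hLf hD hLipf hδ hy0 hfwd hfwdp hi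
  have hvb := fun i (h1 : 1 ≤ i) (hi : i ≤ N) => norm_backward_le hCf hdN hJ1 hvN hbwd h1 hi
  have hverr := fun i (h1 : 1 ≤ i) (hi : i ≤ N) => norm_backward_error_le hCf hL1f hD
    (by positivity) (by positivity) hJ1 hLipJ1 hε hyerr hvb hvN hvtilN hbwd hbwdp h1 hi
  exact norm_sq_paramGrad_sub_le_of_bounds hCf hL1f (by positivity) hJ2 hLipJ2 hyerr hvb hverr
    hu hut

end Backpropagation

lemma sum_range_le_of_le_sub_add {a b c : ℕ → ℝ} (h : ∀ t, a t ≤ b t - b (t + 1) + c t)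
    (n : ℕ) : ∑ t ∈ Finset.range n, a t ≤ b 0 - b n + ∑ t ∈ Finset.range n, c t := by
  have := Finset.sum_le_sum fun t (_ : t ∈ Finset.range n) => h t
  rwa [Finset.sum_add_distrib, Finset.sum_range_sub'] at this

lemma sum_range_le_card_mul_of_le_of_nonpos {e : ℕ → ℝ} {S : Finset (ℕ × ℕ)} {B : ℝ} {T : ℕ}
    (hB : 0 ≤ B) (hle : ∀ t < T, e t ≤ B) (hnonpos : ∀ t < T, (∀ i, (t, i) ∉ S) → e t ≤ 0) :
    ∑ t ∈ Finset.range T, e t ≤ S.card * B := by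
  classical
  calc ∑ t ∈ Finset.range T, e t
      ≤ ∑ t ∈ Finset.range T, if t ∈ S.image Prod.fst then B else 0 := by
        refine Finset.sum_le_sum fun t ht => ?_
        have htT := Finset.mem_range.1 ht
        split_ifs with hS
        · exact hle t htT
        · exact hnonpos t htT fun i hi => hS (Finset.mem_image_of_mem Prod.fst hi)
    _ = (Finset.range T ∩ S.image Prod.fst).card * B := by
        rw [Finset.sum_ite_mem, Finset.sum_const, nsmul_eq_mul]
    _ ≤ S.card * B := by
        gcongr
        exact (Finset.card_le_card Finset.inter_subset_right).trans Finset.card_image_le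

lemma pos_and_mul_le_one_of_eq_min {L r γ : ℝ} (hL : 0 < L) (hr : 0 < r)
    (hγ : γ = min (1 / (3 * L)) r) : 0 < γ ∧ γ * (3 * L) ≤ 1 := by
  subst hγ
  refine ⟨lt_min (by positivity) hr, ?_⟩
  exact (mul_le_mul_of_nonneg_right (min_le_left _ _) (by positivity)).trans_eq (by field_simp)

lemma div_le_mul_rpow_of_step_size {L a b c C S γ : ℝ} {T : ℕ} (hL : 0 < L) (hT : 1 ≤ T)
    (ha : 0 ≤ a) (hb : 0 ≤ b) (hc : 0 ≤ c) (hS : 0 ≤ S)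
    (hC : (3 * L + 1) * (a + c) + 2 * b ≤ C)
    (hγ : γ = min (1 / (3 * L)) ((T : ℝ) ^ (-(1 : ℝ) / 2)))
    (h : γ * S ≤ a + γ * b * (T : ℝ) ^ ((1 : ℝ) / 2) + c * T * γ ^ 2) :
    1 / (T : ℝ) * S ≤ C * (T : ℝ) ^ (-(1 : ℝ) / 2) := by
  have hT0 : (0 : ℝ) < T := by exact_mod_cast hT
  set s := (T : ℝ) ^ ((1 : ℝ) / 2)
  have hs0 : 0 < s := by positivity
  have hs1 : 1 ≤ s := Real.one_le_rpow (by exact_mod_cast hT) (by norm_num)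
  have hsT : s * s = T := by rw [← Real.rpow_add hT0]; norm_num
  have hinv : (T : ℝ) ^ (-(1 : ℝ) / 2) = s⁻¹ := by rw [neg_div, Real.rpow_neg hT0.le]
  rw [hinv] at hγ ⊢
  obtain ⟨hγ0, hγL⟩ := pos_and_mul_le_one_of_eq_min hL (inv_pos.2 hs0) hγ
  have hγs : γ * s ≤ 1 := by
    rw [hγ]; exact (mul_le_mul_of_nonneg_right (min_le_right _ _) hs0.le).trans_eq
      (inv_mul_cancel₀ hs0.ne')
  have hγ1 : 1 ≤ γ * (3 * L + s) := by
    rcases min_choice (1 / (3 * L)) s⁻¹ with hmin | hmin <;> rw [hγ, hmin]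
    · rw [mul_add, one_div_mul_cancel (by positivity)]; nlinarith
    · rw [mul_add, inv_mul_cancel₀ hs0.ne']; nlinarith
  have hTγ : T * γ ^ 2 ≤ 1 := by nlinarith
  -- `S ≤ γ S (3L + s)`, and each term of `h` times `3L + s` is at most its share of `C s`
  have hSs : S ≤ C * s := by
    nlinarith [mul_le_mul_of_nonneg_right h (by positivity : 0 ≤ 3 * L + s),
      mul_nonneg hS (sub_nonneg.2 hγ1), mul_nonneg ha (sub_nonneg.2 hs1),
      mul_nonneg hc (sub_nonneg.2 hs1), mul_nonneg (mul_nonneg hb hs0.le) (sub_nonneg.2 hγs),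
      mul_nonneg (mul_nonneg hb hs0.le) (sub_nonneg.2 hγL), mul_nonneg hc (sub_nonneg.2 hTγ)]
  rw [← hsT, div_mul_eq_mul_div, one_mul, div_le_iff₀ (by positivity)]
  nlinarith [inv_mul_cancel₀ hs0.ne']

theorem intermittent_biased_nonconvex_general
    (N : ℕ)
    (Lgrad σ Δ₀ Cf C2f Lf L1f L2f D A : ℝ)
    (hLgrad : 0 < Lgrad) (hΔ₀ : 0 ≤ Δ₀)
    (hCf : 0 ≤ Cf) (hLf : 0 ≤ Lf) (hL1f : 0 ≤ L1f)
    (hD : 0 ≤ D) (hA : 0 < A) :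
    ∃ c C : ℝ, 0 < c ∧ 0 < C ∧
      ∀ (d dw : ℕ → ℕ) (hdN : d N = 1)
        (f : (i : ℕ) → EuclideanSpace ℝ (Fin (d (i - 1))) → EuclideanSpace ℝ (Fin (dw i)) →
          EuclideanSpace ℝ (Fin (d i)))
        -- Assumption (A3)
        (hC2 : ∀ i, 1 ≤ i → i ≤ N →
          ContDiff ℝ 2
            (fun p : EuclideanSpace ℝ (Fin (d (i - 1))) × EuclideanSpace ℝ (Fin (dw i)) =>
              f i p.1 p.2))
        (hJ1 : ∀ i, 1 ≤ i → i ≤ N →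
          ∀ (yv : EuclideanSpace ℝ (Fin (d (i - 1)))) (wi : EuclideanSpace ℝ (Fin (dw i))),
            ‖fderiv ℝ (fun z => f i z wi) yv‖ ≤ Cf)
        (hJ2 : ∀ i, 1 ≤ i → i ≤ N →
          ∀ (yv : EuclideanSpace ℝ (Fin (d (i - 1)))) (wi : EuclideanSpace ℝ (Fin (dw i))),
            ‖fderiv ℝ (fun z => f i yv z) wi‖ ≤ Cf)
        (hT21 : ∀ i, 1 ≤ i → i ≤ N →
          ∀ (yv dir : EuclideanSpace ℝ (Fin (d (i - 1)))) (wi : EuclideanSpace ℝ (Fin (dw i))),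
            frobNorm ((fderiv ℝ (fun z => fderiv ℝ (fun w' => f i z w') wi) yv) dir) ≤
              C2f * ‖dir‖)
        (hLipf : ∀ i, 1 ≤ i → i ≤ N →
          ∀ (y₁ y₂ : EuclideanSpace ℝ (Fin (d (i - 1)))) (wi : EuclideanSpace ℝ (Fin (dw i))),
            ‖f i y₁ wi - f i y₂ wi‖ ≤ Lf * ‖y₁ - y₂‖)
        (hLipJ1 : ∀ i, 1 ≤ i → i ≤ N →
          ∀ (y₁ y₂ : EuclideanSpace ℝ (Fin (d (i - 1)))) (wi : EuclideanSpace ℝ (Fin (dw i))),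
            frobNorm (fderiv ℝ (fun z => f i z wi) y₁ - fderiv ℝ (fun z => f i z wi) y₂) ≤
              L1f * ‖y₁ - y₂‖)
        (hLipJ2 : ∀ i, 1 ≤ i → i ≤ N →
          ∀ (y₁ y₂ : EuclideanSpace ℝ (Fin (d (i - 1)))) (wi : EuclideanSpace ℝ (Fin (dw i))),
            frobNorm (fderiv ℝ (fun z => f i y₁ z) wi - fderiv ℝ (fun z => f i y₂ z) wi) ≤
              L1f * ‖y₁ - y₂‖)
        (hLipT : ∀ i, 1 ≤ i → i ≤ N →
          ∀ (y₁ y₂ : EuclideanSpace ℝ (Fin (d (i - 1)))) (wi : EuclideanSpace ℝ (Fin (dw i))),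
            frobNorm3 (fderiv ℝ (fun z => fderiv ℝ (fun w' => f i z w') wi) y₁ -
                fderiv ℝ (fun z => fderiv ℝ (fun w' => f i z w') wi) y₂) ≤
              L2f * ‖y₁ - y₂‖)
        -- the objective `ℓ`, its infimum and the regularizer `R`
        (ℓ R : ParamSpace N dw → ℝ) (lstar : ℝ)
        (hdiffℓ : Differentiable ℝ ℓ) (hdiffR : Differentiable ℝ R)
        -- Assumption (A1)
        (hLipGrad : ∀ p q : ParamSpace N dw,
          ‖gradient ℓ p - gradient ℓ q‖ ≤ Lgrad * ‖p - q‖)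
        (hstar : ∀ p, lstar ≤ ℓ p) (hattain : ∃ p, ℓ p = lstar)
        -- probability space and filtrations
        {Ω : Type} [mΩ : MeasurableSpace Ω] (μ : Measure Ω) (hprob : IsProbabilityMeasure μ)
        (mF : ℕ → MeasurableSpace Ω)
        (hmF : ∀ t, mF t ≤ mΩ) (hmFmono : ∀ t, mF t ≤ mF (t + 1))
        -- iterates, passes and perturbations
        (wseq : ℕ → Ω → ParamSpace N dw)
        (y ytil v vtil : ℕ → (i : ℕ) → Ω → EuclideanSpace ℝ (Fin (d i)))
        (δ : ℕ → (i : ℕ) → Ω → EuclideanSpace ℝ (Fin (d i)))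
        (ε : ℕ → (i : ℕ) → Ω → EuclideanSpace ℝ (Fin (d (i - 1))))
        (uS utS : ℕ → Ω → ParamSpace N dw)
        -- the horizon and the prescribed step size
        (T : ℕ) (hT : 1 ≤ T)
        (γ : ℝ) (hγdef : γ = min (1 / (3 * Lgrad)) (c * (T : ℝ) ^ (-(1 : ℝ) / 2)))
        (w0 : ParamSpace N dw) (hw0 : ∀ ω, wseq 0 ω = w0)
        (hΔ : ℓ w0 - lstar = Δ₀)
        (hy0 : ∀ t ω, ytil t 0 ω = y t 0 ω)
        (hfwd : ∀ t ω, ∀ i, (hi : i < N) →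
          y t (i + 1) ω = f (i + 1) (y t i ω) (wseq t ω ⟨i, hi⟩))
        (hfwdp : ∀ t ω, ∀ i, (hi : i < N) →
          ytil t (i + 1) ω = f (i + 1) (ytil t i ω) (wseq t ω ⟨i, hi⟩) + δ t (i + 1) ω)
        (hvN : ∀ t ω j, v t N ω j = 1) (hvtilN : ∀ t ω j, vtil t N ω j = 1)
        (hbwd : ∀ t ω, ∀ i, 1 ≤ i → (hi : i < N) →
          v t i ω =
            ContinuousLinearMap.adjoint
              (fderiv ℝ (fun z => f (i + 1) z (wseq t ω ⟨i, hi⟩)) (y t i ω))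
              (v t (i + 1) ω))
        (hbwdp : ∀ t ω, ∀ i, 1 ≤ i → (hi : i < N) →
          vtil t i ω =
            ContinuousLinearMap.adjoint
              (fderiv ℝ (fun z => f (i + 1) z (wseq t ω ⟨i, hi⟩)) (ytil t i ω))
                (vtil t (i + 1) ω) + ε t (i + 1) ω)
        (hu : ∀ t ω, ∀ i, (hi : i < N) →
          uS t ω ⟨i, hi⟩ =
            ContinuousLinearMap.adjoint
              (fderiv ℝ (fun z => f (i + 1) (y t i ω) z) (wseq t ω ⟨i, hi⟩))
              (v t (i + 1) ω))
        (hut : ∀ t ω, ∀ i, (hi : i < N) →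
          utS t ω ⟨i, hi⟩ =
            ContinuousLinearMap.adjoint
              (fderiv ℝ (fun z => f (i + 1) (ytil t i ω) z) (wseq t ω ⟨i, hi⟩))
              (vtil t (i + 1) ω))
        (hupd : ∀ t ω, wseq (t + 1) ω = wseq t ω - γ • (utS t ω + gradient R (wseq t ω)))
        -- measurability with respect to the filtrations
        (hwmeas : ∀ t, StronglyMeasurable[mF t] (wseq t))
        -- Assumption (A2): conditional unbiasedness and bounded variance of the
        -- unperturbed stochastic gradient
        (hA2mean : ∀ t,
          μ[fun ω => uS t ω + gradient R (wseq t ω) | mF t] =ᵐ[μ]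
            fun ω => gradient ℓ (wseq t ω))
        (hA2var : ∀ t, ∀ᵐ ω ∂μ,
          (μ[fun ω' => ‖uS t ω' + gradient R (wseq t ω') - gradient ℓ (wseq t ω')‖ ^ 2
              | mF t]) ω ≤ σ ^ 2)
        -- integrability (finite fourth moments)
        (hδ2 : ∀ t i, MemLp (δ t i) 2 μ) (hδ4 : ∀ t i, Integrable (fun ω => ‖δ t i ω‖ ^ 4) μ)
        (hε2 : ∀ t i, MemLp (ε t i) 2 μ)
        (huS2 : ∀ t, MemLp (uS t) 2 μ) (hutS2 : ∀ t, MemLp (utS t) 2 μ)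
        (hR2 : ∀ t, MemLp (fun ω => gradient R (wseq t ω)) 2 μ)
        (hℓint : ∀ t, Integrable (fun ω => ℓ (wseq t ω)) μ)
        (hgint : ∀ t, Integrable (fun ω => ‖gradient ℓ (wseq t ω)‖ ^ 2) μ)
        -- uniformly bounded, intermittent (possibly biased) perturbations
        (hδbd : ∀ t i, ∀ᵐ ω ∂μ, ‖δ t i ω‖ ≤ D)
        (hεbd : ∀ t i, ∀ᵐ ω ∂μ, ‖ε t i ω‖ ≤ D)
        (Sδ Sε : Finset (ℕ × ℕ))
        (hSδ : ∀ t i, t < T → 1 ≤ i → i ≤ N → (t, i) ∉ Sδ → ∀ ω, δ t i ω = 0)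
        (hSε : ∀ t i, t < T → 2 ≤ i → i ≤ N → (t, i) ∉ Sε → ∀ ω, ε t i ω = 0)
        (hQδ : (Sδ.card : ℝ) ≤ A * (T : ℝ) ^ ((1 : ℝ) / 2))
        (hQε : (Sε.card : ℝ) ≤ A * (T : ℝ) ^ ((1 : ℝ) / 2)),
        (1 / (T : ℝ)) * ∑ t ∈ Finset.range T, ∫ ω, ‖gradient ℓ (wseq t ω)‖ ^ 2 ∂μ ≤
          C * (T : ℝ) ^ (-(1 : ℝ) / 2) := by
  refine ⟨1, (3 * Lgrad + 1) * (12 * Δ₀ + 24 * Lgrad * σ ^ 2)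
    + 2 * (48 * A * gradErrorBound N Cf Lf L1f D) + 1, one_pos,
    by have := gradErrorBound_nonneg N Cf Lf L1f D; positivity, ?_⟩
  intro d dw hdN f hC2 hJ1 hJ2 hT21 hLipf hLipJ1 hLipJ2 hLipT ℓ R lstar hdiffℓ hdiffR
    hLipGrad hstar hattain Ω mΩ μ hprob mF hmF hmFmono wseq y ytil v vtil δ ε uS utS T hT
    γ hγdef w0 hw0 hΔ hy0 hfwd hfwdp hvN hvtilN hbwd hbwdp hu hut hupd hwmeas hA2mean hA2var
    hδ2 hδ4 hε2 huS2 hutS2 hR2 hℓint hgint hδbd hεbd Sδ Sε hSδ hSε hQδ hQε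
  rw [one_mul] at hγdef
  set B := gradErrorBound N Cf Lf L1f D
  have hB : 0 ≤ B := gradErrorBound_nonneg _ _ _ _ _
  obtain ⟨hγ0, hγL⟩ := pos_and_mul_le_one_of_eq_min hLgrad (by positivity) hγdef
  have hstep : ∀ t, γ / 12 * ∫ ω, ‖gradient ℓ (wseq t ω)‖ ^ 2 ∂μ
      ≤ ∫ ω, ℓ (wseq t ω) ∂μ - ∫ ω, ℓ (wseq (t + 1) ω) ∂μ
        + (2 * γ * ∫ ω, ‖utS t ω - uS t ω‖ ^ 2 ∂μ + 2 * Lgrad * γ ^ 2 * σ ^ 2) := fun t =>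
    integral_le_sub_integral_add_of_sgd_step (hmF t) hdiffℓ hLgrad.le hLipGrad hγ0.le hγL
      (fun ω => by rw [hupd]; congr 2; simp only [Pi.add_apply]; abel) (hwmeas t) (hℓint t)
      (hℓint (t + 1)) (hgint t) ((huS2 t).add (hR2 t)) ((hutS2 t).sub (huS2 t)) (hA2mean t)
      (hA2var t)
  have hbound : ∀ t ω D', 0 ≤ D' → (∀ i, 1 ≤ i → i ≤ N → ‖δ t i ω‖ ≤ D') →
      (∀ i, 2 ≤ i → i ≤ N → ‖ε t i ω‖ ≤ D') →
      ‖utS t ω - uS t ω‖ ^ 2 ≤ gradErrorBound N Cf Lf L1f D' := fun t ω D' hD' hδ' hε' =>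
    norm_sq_paramGrad_sub_le_gradErrorBound (y := fun i => y t i ω) (ytil := fun i => ytil t i ω)
      (v := fun i => v t i ω) (vtil := fun i => vtil t i ω) hCf hLf hL1f hD' hdN hJ1 hJ2 hLipf
      hLipJ1 hLipJ2 hδ' hε' (hy0 t ω) (hfwd t ω) (hfwdp t ω) (hvN t ω) (hvtilN t ω)
      (hbwd t ω) (hbwdp t ω) (hu t ω) (hut t ω)
  have herr : ∀ t < T, ∫ ω, ‖utS t ω - uS t ω‖ ^ 2 ∂μ ≤ B := fun t _ =>
    (integral_mono_ae (((hutS2 t).sub (huS2 t)).integrable_norm_pow two_ne_zero)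
      (integrable_const B) (by
        filter_upwards [ae_all_iff.2 (hδbd t), ae_all_iff.2 (hεbd t)] with ω hδω hεω
        exact hbound t ω D hD (fun i _ _ => hδω i) (fun i _ _ => hεω i))).trans_eq (by simp)
  -- without perturbations, `hbound` at `D' = 0` gives `ũ = u`
  have hclean : ∀ t < T, (∀ i, (t, i) ∉ Sδ ∪ Sε) → ∫ ω, ‖utS t ω - uS t ω‖ ^ 2 ∂μ ≤ 0 :=
    fun t ht hS => integral_nonpos fun ω => by
      simpa using hbound t ω 0 le_rfl
        (fun i h1 h2 => by simp [hSδ t i ht h1 h2 fun h => hS i (Finset.mem_union_left _ h)])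
        (fun i h1 h2 => by simp [hSε t i ht h1 h2 fun h => hS i (Finset.mem_union_right _ h)])
  have herrsum : ∑ t ∈ Finset.range T, ∫ ω, ‖utS t ω - uS t ω‖ ^ 2 ∂μ
      ≤ 2 * A * (T : ℝ) ^ ((1 : ℝ) / 2) * B := by
    have hcard : ((Sδ ∪ Sε).card : ℝ) ≤ Sδ.card + Sε.card := by
      exact_mod_cast Finset.card_union_le _ _
    nlinarith [sum_range_le_card_mul_of_le_of_nonpos hB herr hclean]
  have hgap : ∫ ω, ℓ (wseq 0 ω) ∂μ - ∫ ω, ℓ (wseq T ω) ∂μ ≤ Δ₀ := by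
    have := integral_mono (integrable_const lstar) (hℓint T) fun ω => hstar _
    simp only [hw0, integral_const, probReal_univ, one_smul] at this ⊢
    linarith
  have htele := sum_range_le_of_le_sub_add hstep T
  rw [← Finset.mul_sum, Finset.sum_add_distrib, ← Finset.mul_sum, Finset.sum_const,
    Finset.card_range, nsmul_eq_mul] at htele
  refine div_le_mul_rpow_of_step_size hLgrad hT (a := 12 * Δ₀) (b := 48 * A * B)
    (c := 24 * Lgrad * σ ^ 2) (by positivity) (mul_nonneg (by positivity) hB) (by positivity)
    (Finset.sum_nonneg fun t _ => integral_nonneg fun ω => sq_nonneg _)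
    (le_add_of_nonneg_right zero_le_one) hγdef ?_
  nlinarith [mul_le_mul_of_nonneg_left herrsum hγ0.le]

/-- **Corollary 6.4, nonconvex part: possibly biased intermittent perturbations.**
Under Assumptions (A1)–(A3), if the perturbations are uniformly bounded by `D` (no zero-mean
assumption) and vanish identically outside sets `Sδ`, `Sε` of index pairs `(t, i)` with
`#Sδ ≤ A T^{1/2}` and `#Sε ≤ A T^{1/2}`, then for `γ = min (1/(3 L_{∇ℓ})) (c T^{-1/2})` the
perturbed SGD iterates satisfy `(1/T) ∑_t E‖∇ℓ(w^{(t)})‖² ≤ C T^{-1/2}`, where `c, C > 0`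
depend only on the displayed problem parameters. -/
theorem intermittent_biased_nonconvex
    (N : ℕ) (hN : 2 ≤ N)
    (Lgrad σ Δ₀ Cf C2f Lf L1f L2f D A : ℝ)
    (hLgrad : 0 < Lgrad) (hσ : 0 ≤ σ) (hΔ₀ : 0 ≤ Δ₀)
    (hCf : 0 ≤ Cf) (hC2f : 0 ≤ C2f) (hLf : 0 ≤ Lf) (hL1f : 0 ≤ L1f) (hL2f : 0 ≤ L2f)
    (hD : 0 ≤ D) (hA : 0 < A) :
    ∃ c C : ℝ, 0 < c ∧ 0 < C ∧
      ∀ (d dw : ℕ → ℕ) (hdN : d N = 1)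
        (f : (i : ℕ) → EuclideanSpace ℝ (Fin (d (i - 1))) → EuclideanSpace ℝ (Fin (dw i)) →
          EuclideanSpace ℝ (Fin (d i)))
        -- Assumption (A3)
        (hC2 : ∀ i, 1 ≤ i → i ≤ N →
          ContDiff ℝ 2
            (fun p : EuclideanSpace ℝ (Fin (d (i - 1))) × EuclideanSpace ℝ (Fin (dw i)) =>
              f i p.1 p.2))
        (hJ1 : ∀ i, 1 ≤ i → i ≤ N →
          ∀ (yv : EuclideanSpace ℝ (Fin (d (i - 1)))) (wi : EuclideanSpace ℝ (Fin (dw i))),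
            ‖fderiv ℝ (fun z => f i z wi) yv‖ ≤ Cf)
        (hJ2 : ∀ i, 1 ≤ i → i ≤ N →
          ∀ (yv : EuclideanSpace ℝ (Fin (d (i - 1)))) (wi : EuclideanSpace ℝ (Fin (dw i))),
            ‖fderiv ℝ (fun z => f i yv z) wi‖ ≤ Cf)
        (hT21 : ∀ i, 1 ≤ i → i ≤ N →
          ∀ (yv dir : EuclideanSpace ℝ (Fin (d (i - 1)))) (wi : EuclideanSpace ℝ (Fin (dw i))),
            frobNorm ((fderiv ℝ (fun z => fderiv ℝ (fun w' => f i z w') wi) yv) dir) ≤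
              C2f * ‖dir‖)
        (hLipf : ∀ i, 1 ≤ i → i ≤ N →
          ∀ (y₁ y₂ : EuclideanSpace ℝ (Fin (d (i - 1)))) (wi : EuclideanSpace ℝ (Fin (dw i))),
            ‖f i y₁ wi - f i y₂ wi‖ ≤ Lf * ‖y₁ - y₂‖)
        (hLipJ1 : ∀ i, 1 ≤ i → i ≤ N →
          ∀ (y₁ y₂ : EuclideanSpace ℝ (Fin (d (i - 1)))) (wi : EuclideanSpace ℝ (Fin (dw i))),
            frobNorm (fderiv ℝ (fun z => f i z wi) y₁ - fderiv ℝ (fun z => f i z wi) y₂) ≤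
              L1f * ‖y₁ - y₂‖)
        (hLipJ2 : ∀ i, 1 ≤ i → i ≤ N →
          ∀ (y₁ y₂ : EuclideanSpace ℝ (Fin (d (i - 1)))) (wi : EuclideanSpace ℝ (Fin (dw i))),
            frobNorm (fderiv ℝ (fun z => f i y₁ z) wi - fderiv ℝ (fun z => f i y₂ z) wi) ≤
              L1f * ‖y₁ - y₂‖)
        (hLipT : ∀ i, 1 ≤ i → i ≤ N →
          ∀ (y₁ y₂ : EuclideanSpace ℝ (Fin (d (i - 1)))) (wi : EuclideanSpace ℝ (Fin (dw i))),
            frobNorm3 (fderiv ℝ (fun z => fderiv ℝ (fun w' => f i z w') wi) y₁ -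
                fderiv ℝ (fun z => fderiv ℝ (fun w' => f i z w') wi) y₂) ≤
              L2f * ‖y₁ - y₂‖)
        -- the objective `ℓ`, its infimum and the regularizer `R`
        (ℓ R : ParamSpace N dw → ℝ) (lstar : ℝ)
        (hdiffℓ : Differentiable ℝ ℓ) (hdiffR : Differentiable ℝ R)
        -- Assumption (A1)
        (hLipGrad : ∀ p q : ParamSpace N dw,
          ‖gradient ℓ p - gradient ℓ q‖ ≤ Lgrad * ‖p - q‖)
        (hstar : ∀ p, lstar ≤ ℓ p) (hattain : ∃ p, ℓ p = lstar)
        -- probability space and filtrations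
        {Ω : Type} [mΩ : MeasurableSpace Ω] (μ : Measure Ω) (hprob : IsProbabilityMeasure μ)
        (mF : ℕ → MeasurableSpace Ω)
        (hmF : ∀ t, mF t ≤ mΩ) (hmFmono : ∀ t, mF t ≤ mF (t + 1))
        -- iterates, passes and perturbations
        (wseq : ℕ → Ω → ParamSpace N dw)
        (y ytil v vtil : ℕ → (i : ℕ) → Ω → EuclideanSpace ℝ (Fin (d i)))
        (δ : ℕ → (i : ℕ) → Ω → EuclideanSpace ℝ (Fin (d i)))
        (ε : ℕ → (i : ℕ) → Ω → EuclideanSpace ℝ (Fin (d (i - 1))))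
        (uS utS : ℕ → Ω → ParamSpace N dw)
        -- the horizon and the prescribed step size
        (T : ℕ) (hT : 1 ≤ T)
        (γ : ℝ) (hγdef : γ = min (1 / (3 * Lgrad)) (c * (T : ℝ) ^ (-(1 : ℝ) / 2)))
        (w0 : ParamSpace N dw) (hw0 : ∀ ω, wseq 0 ω = w0)
        (hΔ : ℓ w0 - lstar = Δ₀)
        (hy0 : ∀ t ω, ytil t 0 ω = y t 0 ω)
        (hfwd : ∀ t ω, ∀ i, (hi : i < N) →
          y t (i + 1) ω = f (i + 1) (y t i ω) (wseq t ω ⟨i, hi⟩))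
        (hfwdp : ∀ t ω, ∀ i, (hi : i < N) →
          ytil t (i + 1) ω = f (i + 1) (ytil t i ω) (wseq t ω ⟨i, hi⟩) + δ t (i + 1) ω)
        (hvN : ∀ t ω j, v t N ω j = 1) (hvtilN : ∀ t ω j, vtil t N ω j = 1)
        (hbwd : ∀ t ω, ∀ i, 1 ≤ i → (hi : i < N) →
          v t i ω =
            ContinuousLinearMap.adjoint
              (fderiv ℝ (fun z => f (i + 1) z (wseq t ω ⟨i, hi⟩)) (y t i ω))
              (v t (i + 1) ω))
        (hbwdp : ∀ t ω, ∀ i, 1 ≤ i → (hi : i < N) →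
          vtil t i ω =
            ContinuousLinearMap.adjoint
              (fderiv ℝ (fun z => f (i + 1) z (wseq t ω ⟨i, hi⟩)) (ytil t i ω))
                (vtil t (i + 1) ω) + ε t (i + 1) ω)
        (hu : ∀ t ω, ∀ i, (hi : i < N) →
          uS t ω ⟨i, hi⟩ =
            ContinuousLinearMap.adjoint
              (fderiv ℝ (fun z => f (i + 1) (y t i ω) z) (wseq t ω ⟨i, hi⟩))
              (v t (i + 1) ω))
        (hut : ∀ t ω, ∀ i, (hi : i < N) →
          utS t ω ⟨i, hi⟩ =
            ContinuousLinearMap.adjoint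
              (fderiv ℝ (fun z => f (i + 1) (ytil t i ω) z) (wseq t ω ⟨i, hi⟩))
              (vtil t (i + 1) ω))
        (hupd : ∀ t ω, wseq (t + 1) ω = wseq t ω - γ • (utS t ω + gradient R (wseq t ω)))
        -- measurability with respect to the filtrations
        (hwmeas : ∀ t, StronglyMeasurable[mF t] (wseq t))
        -- Assumption (A2): conditional unbiasedness and bounded variance of the
        -- unperturbed stochastic gradient
        (hA2mean : ∀ t,
          μ[fun ω => uS t ω + gradient R (wseq t ω) | mF t] =ᵐ[μ]
            fun ω => gradient ℓ (wseq t ω))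
        (hA2var : ∀ t, ∀ᵐ ω ∂μ,
          (μ[fun ω' => ‖uS t ω' + gradient R (wseq t ω') - gradient ℓ (wseq t ω')‖ ^ 2
              | mF t]) ω ≤ σ ^ 2)
        -- integrability (finite fourth moments)
        (hδ2 : ∀ t i, MemLp (δ t i) 2 μ) (hδ4 : ∀ t i, Integrable (fun ω => ‖δ t i ω‖ ^ 4) μ)
        (hε2 : ∀ t i, MemLp (ε t i) 2 μ)
        (huS2 : ∀ t, MemLp (uS t) 2 μ) (hutS2 : ∀ t, MemLp (utS t) 2 μ)
        (hR2 : ∀ t, MemLp (fun ω => gradient R (wseq t ω)) 2 μ)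
        (hℓint : ∀ t, Integrable (fun ω => ℓ (wseq t ω)) μ)
        (hgint : ∀ t, Integrable (fun ω => ‖gradient ℓ (wseq t ω)‖ ^ 2) μ)
        -- uniformly bounded, intermittent (possibly biased) perturbations
        (hδbd : ∀ t i, ∀ᵐ ω ∂μ, ‖δ t i ω‖ ≤ D)
        (hεbd : ∀ t i, ∀ᵐ ω ∂μ, ‖ε t i ω‖ ≤ D)
        (Sδ Sε : Finset (ℕ × ℕ))
        (hSδ : ∀ t i, t < T → 1 ≤ i → i ≤ N → (t, i) ∉ Sδ → ∀ ω, δ t i ω = 0)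
        (hSε : ∀ t i, t < T → 2 ≤ i → i ≤ N → (t, i) ∉ Sε → ∀ ω, ε t i ω = 0)
        (hQδ : (Sδ.card : ℝ) ≤ A * (T : ℝ) ^ ((1 : ℝ) / 2))
        (hQε : (Sε.card : ℝ) ≤ A * (T : ℝ) ^ ((1 : ℝ) / 2)),
        (1 / (T : ℝ)) * ∑ t ∈ Finset.range T, ∫ ω, ‖gradient ℓ (wseq t ω)‖ ^ 2 ∂μ ≤
          C * (T : ℝ) ^ (-(1 : ℝ) / 2) :=
  intermittent_biased_nonconvex_general N Lgrad σ Δ₀ Cf C2f Lf L1f L2f D A hLgrad hΔ₀ hCf hLf hL1f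
    hD hA
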